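/- (Lumped mass is the identity.) Assume Σ_{j=1}^N B_j(x) = 1 for every x ∈ [a,b] and that the constant function 1 belongs to a subspace P ⊆ V on which the approximate duality property holds. Define C ∈ ℝ^{N×N} by C_{ij} = ⟨D̂_i, B_j⟩ and its rowsum-lumped matrix by C^lumped_{ij} = δ_{ij} Σ_{k=1}^N C_{ik}. Then C^lumped is the N×N identity matrix. -/

import Mathlib

open MeasureTheory Matrix

/-!
Since `∑ₖ Bₖ = 1`, the `i`-th row sum of `C` is `∫ D̂ᵢ`, which equals `∫ Dᵢ` by duality against
`f = 1`. The same partition of unity gives `∫ Bⱼ = ∑ₖ Gⱼₖ`, so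
`∫ Dᵢ = ∑ⱼ (G⁻¹)ᵢⱼ ∫ Bⱼ = ((G⁻¹ G) 𝟙)ᵢ = 1`. This needs `G` to be invertible, and it is
positive definite: its quadratic form is `c ↦ ∫ (∑ᵢ cᵢ Bᵢ)²`, which vanishes only when
`∑ᵢ cᵢ Bᵢ = 0` almost everywhere.
-/

section Gram

variable {ι X : Type*} [MeasurableSpace X] {μ : Measure X} {B : ι → X → ℝ}

variable (μ B) in
noncomputable def gramMatrix : Matrix ι ι ℝ :=
  of fun i j => ∫ x, B i x * B j x ∂μ

theorem gramMatrix_isHermitian : (gramMatrix μ B).IsHermitian := by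
  ext i j
  simp only [gramMatrix, conjTranspose_apply, of_apply, star_trivial, mul_comm]

theorem sq_sum_mul_eq_sum_sum [Fintype ι] (c b : ι → ℝ) :
    (∑ i, c i * b i) ^ 2 = ∑ i, ∑ j, c i * c j * (b i * b j) := by
  rw [sq, Finset.sum_mul_sum]
  exact Finset.sum_congr rfl fun i _ => Finset.sum_congr rfl fun j _ => by ring

theorem integrable_sq_sum_mul [Fintype ι] (hB : ∀ i j, Integrable (fun x => B i x * B j x) μ)
    (c : ι → ℝ) : Integrable (fun x => (∑ i, c i * B i x) ^ 2) μ := by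
  simp_rw [sq_sum_mul_eq_sum_sum]
  exact integrable_finsetSum _ fun i _ => integrable_finsetSum _ fun j _ => (hB i j).const_mul _

theorem dotProduct_gramMatrix_mulVec [Fintype ι]
    (hB : ∀ i j, Integrable (fun x => B i x * B j x) μ) (c : ι → ℝ) :
    c ⬝ᵥ (gramMatrix μ B *ᵥ c) = ∫ x, (∑ i, c i * B i x) ^ 2 ∂μ := by
  simp_rw [sq_sum_mul_eq_sum_sum]
  rw [integral_finsetSum _ fun i _ => integrable_finsetSum _ fun j _ => (hB i j).const_mul _]
  simp_rw [integral_finsetSum _ fun j _ => (hB _ j).const_mul _, integral_const_mul]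
  simp only [dotProduct, mulVec, gramMatrix, of_apply, Finset.mul_sum]
  exact Finset.sum_congr rfl fun i _ => Finset.sum_congr rfl fun j _ => by ring

theorem gramMatrix_posDef [Fintype ι] (hB : ∀ i j, Integrable (fun x => B i x * B j x) μ)
    (hli : ∀ c : ι → ℝ, (∀ᵐ x ∂μ, ∑ i, c i * B i x = 0) → c = 0) :
    (gramMatrix μ B).PosDef := by
  refine .of_dotProduct_mulVec_pos gramMatrix_isHermitian fun c hc => ?_
  rw [star_trivial, dotProduct_gramMatrix_mulVec hB]
  refine (integral_nonneg fun x => sq_nonneg _).lt_of_ne' fun h0 => hc (hli c ?_)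
  have hsq : ∀ᵐ x ∂μ, (∑ i, c i * B i x) ^ 2 = 0 :=
    (integral_eq_zero_iff_of_nonneg (fun x => sq_nonneg _) (integrable_sq_sum_mul hB c)).mp h0
  filter_upwards [hsq] with x hx
  exact pow_eq_zero_iff two_ne_zero |>.mp hx

theorem sum_integral_mul_of_sum_eq_one [Fintype ι] {f : X → ℝ}
    (hf : ∀ k, Integrable (fun x => f x * B k x) μ)
    (hpart : ∀ᵐ x ∂μ, ∑ k, B k x = 1) : ∑ k, ∫ x, f x * B k x ∂μ = ∫ x, f x ∂μ := by
  rw [← integral_finsetSum _ fun k _ => hf k]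
  refine integral_congr_ae ?_
  filter_upwards [hpart] with x hx
  rw [← Finset.mul_sum, hx, mul_one]

theorem integral_sum_gramMatrix_inv_mul [Fintype ι] [DecidableEq ι]
    (hB : ∀ i j, Integrable (fun x => B i x * B j x) μ) (hBint : ∀ i, Integrable (B i) μ)
    (hli : ∀ c : ι → ℝ, (∀ᵐ x ∂μ, ∑ i, c i * B i x = 0) → c = 0)
    (hpart : ∀ᵐ x ∂μ, ∑ k, B k x = 1) (i : ι) :
    ∫ x, ∑ j, (gramMatrix μ B)⁻¹ i j * B j x ∂μ = 1 := by
  set G := gramMatrix μ B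
  have hintegral_B : (fun j => ∫ x, B j x ∂μ) = G *ᵥ 1 := by
    ext j
    simp only [G, gramMatrix, mulVec, dotProduct, of_apply, Pi.one_apply, mul_one]
    exact (sum_integral_mul_of_sum_eq_one (hB j) hpart).symm
  have hinv : G⁻¹ * G = 1 := nonsing_inv_mul G (gramMatrix_posDef hB hli).det_pos.ne'.isUnit
  calc ∫ x, ∑ j, G⁻¹ i j * B j x ∂μ = (G⁻¹ *ᵥ fun j => ∫ x, B j x ∂μ) i := by
        rw [integral_finsetSum _ fun j _ => (hBint j).const_mul _]
        simp only [integral_const_mul, mulVec, dotProduct]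
    _ = 1 := by rw [hintegral_B, mulVec_mulVec, hinv, one_mulVec, Pi.one_apply]

end Gram

theorem lumped_mass_is_identity_general
    (a b : ℝ) (N : ℕ)
    (B : Fin N → ℝ → ℝ)
    (hBcont : ∀ i, ContinuousOn (B i) (Set.Icc a b))
    (hBli : ∀ c : Fin N → ℝ,
      (∀ᵐ x ∂(volume.restrict (Set.Icc a b)), ∑ i, c i * B i x = 0) → c = 0)
    (G : Matrix (Fin N) (Fin N) ℝ)
    (hG : ∀ i j, G i j = ∫ x in Set.Icc a b, B i x * B j x)
    (D : Fin N → ℝ → ℝ)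
    (hD : ∀ i x, D i x = ∑ j, G⁻¹ i j * B j x)
    (S : Matrix (Fin N) (Fin N) ℝ)
    (Dhat : Fin N → ℝ → ℝ)
    (hDhat : ∀ i x, Dhat i x = ∑ j, S i j * B j x)
    (P : Submodule ℝ (ℝ → ℝ))
    (hdual : ∀ f ∈ P, ∀ i,
      (∫ x in Set.Icc a b, f x * Dhat i x) = ∫ x in Set.Icc a b, f x * D i x)
    (hpart : ∀ x ∈ Set.Icc a b, (∑ j, B j x) = 1)
    (hone : (fun _ : ℝ => (1 : ℝ)) ∈ P)
    (C : Matrix (Fin N) (Fin N) ℝ)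
    (hC : ∀ i j, C i j = ∫ x in Set.Icc a b, Dhat i x * B j x)
    (Clumped : Matrix (Fin N) (Fin N) ℝ)
    (hClumped : ∀ i j, Clumped i j = if i = j then ∑ k, C i k else 0) :
    Clumped = 1 := by
  have hpart_ae : ∀ᵐ x ∂(volume.restrict (Set.Icc a b)), ∑ j, B j x = 1 :=
    ae_restrict_of_forall_mem measurableSet_Icc hpart
  have hBB : ∀ i j, IntegrableOn (fun x => B i x * B j x) (Set.Icc a b) :=
    fun i j => ((hBcont i).mul (hBcont j)).integrableOn_Icc
  have hDhatB : ∀ i k, IntegrableOn (fun x => Dhat i x * B k x) (Set.Icc a b) := by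
    intro i k
    simp_rw [hDhat]
    exact ((continuousOn_finsetSum _ fun j _ => continuousOn_const.mul (hBcont j)).mul
      (hBcont k)).integrableOn_Icc
  have hGram : G = gramMatrix (volume.restrict (Set.Icc a b)) B := Matrix.ext hG
  ext i j
  rw [hClumped, Matrix.one_apply]
  split_ifs with hij
  · subst hij
    calc ∑ k, C i k = ∫ x in Set.Icc a b, Dhat i x := by
          simp_rw [hC]
          exact sum_integral_mul_of_sum_eq_one (hDhatB i) hpart_ae
      _ = ∫ x in Set.Icc a b, D i x := by simpa only [one_mul] using hdual _ hone i
      _ = 1 := by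
          simp_rw [hD, hGram]
          exact integral_sum_gramMatrix_inv_mul hBB (fun j => (hBcont j).integrableOn_Icc) hBli
            hpart_ae i
  · rfl

/-- Lumped mass is the identity: If the family `B 1, …, B N` forms a
partition of unity on `[a,b]` and the constant function `1` belongs to a subspace
`P ⊆ V` on which the approximate duality property holds, then the rowsum-lumped matrix
of the Petrov–Galerkin mass matrix `C i j = ⟨D̂ i, B j⟩` is the identity matrix. -/
theorem lumped_mass_is_identity
    (a b : ℝ) (hab : a < b) (N : ℕ) (hN : 1 ≤ N)
    (B : Fin N → ℝ → ℝ)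
    (hBcont : ∀ i, ContinuousOn (B i) (Set.Icc a b))
    (hBli : ∀ c : Fin N → ℝ,
      (∀ᵐ x ∂(volume.restrict (Set.Icc a b)), ∑ i, c i * B i x = 0) → c = 0)
    (G : Matrix (Fin N) (Fin N) ℝ)
    (hG : ∀ i j, G i j = ∫ x in Set.Icc a b, B i x * B j x)
    (D : Fin N → ℝ → ℝ)
    (hD : ∀ i x, D i x = ∑ j, G⁻¹ i j * B j x)
    (S : Matrix (Fin N) (Fin N) ℝ) (hS : S.PosDef)
    (Dhat : Fin N → ℝ → ℝ)
    (hDhat : ∀ i x, Dhat i x = ∑ j, S i j * B j x)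
    (P : Submodule ℝ (ℝ → ℝ))
    (hPV : P ≤ Submodule.span ℝ (Set.range B))
    (hdual : ∀ f ∈ P, ∀ i,
      (∫ x in Set.Icc a b, f x * Dhat i x) = ∫ x in Set.Icc a b, f x * D i x)
    (hpart : ∀ x ∈ Set.Icc a b, (∑ j, B j x) = 1)
    (hone : (fun _ : ℝ => (1 : ℝ)) ∈ P)
    (C : Matrix (Fin N) (Fin N) ℝ)
    (hC : ∀ i j, C i j = ∫ x in Set.Icc a b, Dhat i x * B j x)
    (Clumped : Matrix (Fin N) (Fin N) ℝ)
    (hClumped : ∀ i j, Clumped i j = if i = j then ∑ k, C i k else 0) :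
    Clumped = 1 :=
  lumped_mass_is_identity_general a b N B hBcont hBli G hG D hD S Dhat hDhat P hdual hpart hone C hC
    Clumped hClumped
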